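/- If the maximum of the squared norm of the second fundamental form satisfies the differential inequality d/dt (max |A|^2) ≤ 2 (max |A|^2)^2 on [0,T) and max |A|^2 blows up as t → T, then max_{M_t} |A| ≥ 1/(2(T−t))^{1/2} for all t < T; in particular any nonnegative function u on [0,T) with u' ≤ 2u^2 and u(t) → ∞ as t → T satisfies u(t) ≥ 1/(2(T−t)). -/

import Mathlib

/-!
Compare `u` with the explicit solutions `B t = (k (T - t) + ε)⁻¹` of the Riccati equation
`B' = k B²`, for `k > c` and `ε > 0`. At a first contact point `u = B` we would have
`u' ≤ c u² < k B² = B'`, so a function starting below such a `B` stays below it, hence stays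
bounded by `ε⁻¹` up to `T`, which is incompatible with blow-up. Thus `u t ≥ (k (T - t) + ε)⁻¹`
for all such `k, ε`, and letting `k → c`, `ε → 0` gives `u t ≥ (c (T - t))⁻¹`.
-/

open Filter Set Topology

noncomputable def riccatiBarrier (k T ε t : ℝ) : ℝ := (k * (T - t) + ε)⁻¹

section RiccatiBarrier

variable {k T ε : ℝ}

lemma riccatiBarrier_denom_pos (hk : 0 ≤ k) (hε : 0 < ε) {t : ℝ} (ht : t ≤ T) :
    0 < k * (T - t) + ε :=
  add_pos_of_nonneg_of_pos (mul_nonneg hk (sub_nonneg.2 ht)) hε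

lemma riccatiBarrier_le_inv (hk : 0 ≤ k) (hε : 0 < ε) {t : ℝ} (ht : t ≤ T) :
    riccatiBarrier k T ε t ≤ ε⁻¹ :=
  inv_anti₀ hε (le_add_of_nonneg_left (mul_nonneg hk (sub_nonneg.2 ht)))

lemma hasDerivAt_riccatiBarrier {t : ℝ} (ht : k * (T - t) + ε ≠ 0) :
    HasDerivAt (riccatiBarrier k T ε) (k * riccatiBarrier k T ε t ^ 2) t := by
  have hden : HasDerivAt (fun s => k * (T - s) + ε) (-k) t := by
    simpa using (((hasDerivAt_id t).const_sub T).const_mul k).add_const ε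
  have hinv := hden.inv ht
  rwa [neg_neg, div_eq_mul_inv, ← inv_pow] at hinv

end RiccatiBarrier

section BlowUp

variable {u u' : ℝ → ℝ} {c T : ℝ}

lemma le_riccatiBarrier_of_deriv_le_mul_sq {k ε a : ℝ} (hck : c < k) (hk : 0 ≤ k) (hε : 0 < ε)
    (hderiv : ∀ t ∈ Ico a T, HasDerivAt u (u' t) t)
    (hineq : ∀ t ∈ Ico a T, u' t ≤ c * u t ^ 2)
    (ha : u a ≤ riccatiBarrier k T ε a) :
    ∀ t ∈ Ico a T, u t ≤ riccatiBarrier k T ε t := by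
  intro b hb
  have hsub : Icc a b ⊆ Ico a T := Icc_subset_Ico_right hb.2
  have hden : ∀ x ∈ Icc a b, 0 < k * (T - x) + ε := fun x hx =>
    riccatiBarrier_denom_pos hk hε (hsub hx).2.le
  have hB : ∀ x ∈ Icc a b, HasDerivAt (riccatiBarrier k T ε)
      (k * riccatiBarrier k T ε x ^ 2) x := fun x hx =>
    hasDerivAt_riccatiBarrier (hden x hx).ne'
  refine image_le_of_deriv_right_lt_deriv_boundary'
    (fun x hx => (hderiv x (hsub hx)).continuousAt.continuousWithinAt)
    (fun x hx => (hderiv x (hsub (Ico_subset_Icc_self hx))).hasDerivWithinAt) ha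
    (fun x hx => (hB x hx).continuousAt.continuousWithinAt)
    (fun x hx => (hB x (Ico_subset_Icc_self hx)).hasDerivWithinAt) ?_ ⟨hb.1, le_rfl⟩
  intro x hx hcontact
  have hpos : 0 < riccatiBarrier k T ε x ^ 2 :=
    pow_pos (inv_pos.2 (hden x (Ico_subset_Icc_self hx))) 2
  calc u' x ≤ c * u x ^ 2 := hineq x (hsub (Ico_subset_Icc_self hx))
    _ = c * riccatiBarrier k T ε x ^ 2 := by rw [hcontact]
    _ < k * riccatiBarrier k T ε x ^ 2 := mul_lt_mul_of_pos_right hck hpos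

lemma exists_gt_of_tendsto_nhdsLT_atTop {a : ℝ} (haT : a < T)
    (hblow : Tendsto u (𝓝[<] T) atTop) (M : ℝ) : ∃ t ∈ Ico a T, M < u t := by
  obtain ⟨t, hMt, ht⟩ := ((hblow.eventually_gt_atTop M).and (Ico_mem_nhdsLT haT)).exists
  exact ⟨t, ht, hMt⟩

lemma riccatiBarrier_le_of_tendsto_atTop {k ε a : ℝ} (haT : a < T) (hck : c < k) (hk : 0 ≤ k)
    (hε : 0 < ε) (hderiv : ∀ t ∈ Ico a T, HasDerivAt u (u' t) t)
    (hineq : ∀ t ∈ Ico a T, u' t ≤ c * u t ^ 2)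
    (hblow : Tendsto u (𝓝[<] T) atTop) :
    riccatiBarrier k T ε a ≤ u a := by
  by_contra! hlt
  have hbdd := le_riccatiBarrier_of_deriv_le_mul_sq hck hk hε hderiv hineq hlt.le
  obtain ⟨t, ht, hgt⟩ := exists_gt_of_tendsto_nhdsLT_atTop haT hblow ε⁻¹
  exact (hgt.trans_le (hbdd t ht)).not_ge (riccatiBarrier_le_inv hk hε ht.2.le)

theorem inv_le_of_deriv_le_mul_sq_of_tendsto_atTop {a : ℝ} (hc : 0 < c) (haT : a < T)
    (hderiv : ∀ t ∈ Ico a T, HasDerivAt u (u' t) t)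
    (hineq : ∀ t ∈ Ico a T, u' t ≤ c * u t ^ 2)
    (hblow : Tendsto u (𝓝[<] T) atTop) :
    (c * (T - a))⁻¹ ≤ u a := by
  have hlim : Tendsto (fun ε => riccatiBarrier (c + ε) T ε a) (𝓝[>] 0) (𝓝 (c * (T - a))⁻¹) := by
    have hden : Tendsto (fun ε => (c + ε) * (T - a) + ε) (𝓝 0) (𝓝 (c * (T - a))) := by
      convert (((tendsto_const_nhds (x := c)).add tendsto_id).mul_const (T - a)).add
        tendsto_id using 2 <;> simp
    exact (hden.inv₀ (mul_pos hc (sub_pos.2 haT)).ne').mono_left nhdsWithin_le_nhds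
  refine le_of_tendsto hlim (eventually_nhdsWithin_of_forall fun ε (hε : ε ∈ Ioi 0) => ?_)
  exact riccatiBarrier_le_of_tendsto_atTop haT (lt_add_of_pos_right c hε) (add_pos hc hε).le hε
    hderiv hineq hblow

end BlowUp

theorem mcf_blowup_rate_general (T : ℝ) (u u' : ℝ → ℝ)
    (hderiv : ∀ t ∈ Set.Ico (0:ℝ) T, HasDerivAt u (u' t) t)
    (hineq : ∀ t ∈ Set.Ico (0:ℝ) T, u' t ≤ 2 * (u t) ^ 2)
    (hblow : Tendsto u (nhdsWithin T (Set.Iio T)) atTop) :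
    ∀ t ∈ Set.Ico (0:ℝ) T,
      1 / (2 * (T - t)) ≤ u t ∧ 1 / Real.sqrt (2 * (T - t)) ≤ Real.sqrt (u t) := by
  intro t ht
  have hsub : Ico t T ⊆ Ico 0 T := Ico_subset_Ico_left ht.1
  have hrate : 1 / (2 * (T - t)) ≤ u t := by
    rw [one_div]
    exact inv_le_of_deriv_le_mul_sq_of_tendsto_atTop two_pos ht.2
      (fun s hs => hderiv s (hsub hs)) (fun s hs => hineq s (hsub hs)) hblow
  refine ⟨hrate, ?_⟩
  simpa only [one_div, Real.sqrt_inv] using Real.sqrt_le_sqrt hrate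

/-- Huisken's blow-up rate lemma, ODE comparison core: if `u = max_{M_t} |A|^2`
satisfies `u' ≤ 2 u^2` on `[0,T)` and blows up as `t → T⁻`, then
`u t ≥ 1/(2(T-t))`, i.e. `max |A| ≥ (2(T-t))^{-1/2}`. -/
theorem mcf_blowup_rate (T : ℝ) (hT : 0 < T) (u u' : ℝ → ℝ)
    (hderiv : ∀ t ∈ Set.Ico (0:ℝ) T, HasDerivAt u (u' t) t)
    (hnonneg : ∀ t ∈ Set.Ico (0:ℝ) T, 0 ≤ u t)
    (hineq : ∀ t ∈ Set.Ico (0:ℝ) T, u' t ≤ 2 * (u t) ^ 2)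
    (hblow : Tendsto u (nhdsWithin T (Set.Iio T)) atTop) :
    ∀ t ∈ Set.Ico (0:ℝ) T,
      1 / (2 * (T - t)) ≤ u t ∧ 1 / Real.sqrt (2 * (T - t)) ≤ Real.sqrt (u t) :=
  mcf_blowup_rate_general T u u' hderiv hineq hblow
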